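/- Let Ψ be a vector in the bipartite Hilbert space H = EuclideanSpace ℂ (Fin m × Fin n). Then the supremum over pairs of unit vectors a ∈ EuclideanSpace ℂ (Fin m), b ∈ EuclideanSpace ℂ (Fin n) of |⟨a⊗b, Ψ⟩|² equals the supremum over single unit vectors a of Σ_{k ∈ Fin n} |⟨a⊗e_k, Ψ⟩|², where e_k is the k-th standard basis vector. (Theorem of cascaded structures: the maximal separability eigenvalue of |Ψ⟩⟨Ψ| equals that of its partial trace over the second subsystem.) -/

import Mathlib

/-!
Contracting `Ψ` with `a` on the first factor gives a vector `c_a` with `⟪a ⊗ b, Ψ⟫ = ⟪b, c_a⟫`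
and `∑ k, |⟪a ⊗ e_k, Ψ⟫|² = ‖c_a‖²`. By Cauchy–Schwarz, with equality at `b = c_a / ‖c_a‖`,
the largest value of `|⟪b, c_a⟫|²` over unit vectors `b` is `‖c_a‖²`, so every value in either
set is dominated by a value in the other.
-/

open scoped ComplexInnerProductSpace

noncomputable def tp {m n : ℕ} (a : EuclideanSpace ℂ (Fin m)) (b : EuclideanSpace ℂ (Fin n)) :
    EuclideanSpace ℂ (Fin m × Fin n) :=
  WithLp.toLp 2 (fun p : Fin m × Fin n => a p.1 * b p.2)

section UnitVector

variable {𝕜 E : Type*} [RCLike 𝕜] [NormedAddCommGroup E] [InnerProductSpace 𝕜 E]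

theorem norm_inner_sq_le_of_norm_eq_one {b : E} (hb : ‖b‖ = 1) (c : E) :
    ‖(inner 𝕜 b c : 𝕜)‖ ^ 2 ≤ ‖c‖ ^ 2 := by
  have h := norm_inner_le_norm (𝕜 := 𝕜) b c
  rw [hb, one_mul] at h
  gcongr

theorem exists_norm_eq_one_norm_inner_eq [Nontrivial E] (c : E) :
    ∃ b : E, ‖b‖ = 1 ∧ ‖(inner 𝕜 b c : 𝕜)‖ = ‖c‖ := by
  rcases eq_or_ne c 0 with rfl | hc
  · obtain ⟨x, hx⟩ := exists_ne (0 : E)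
    exact ⟨_, norm_smul_inv_norm (𝕜 := 𝕜) hx, by simp⟩
  · refine ⟨(‖c‖⁻¹ : 𝕜) • c, norm_smul_inv_norm hc, ?_⟩
    rw [inner_smul_left, inner_self_eq_norm_sq_to_K, norm_mul, RCLike.norm_conj, norm_pow]
    simp only [norm_inv, norm_algebraMap', norm_norm]
    field_simp

end UnitVector

/-- The contraction `(⟨a| ⊗ 1) Ψ` of a bipartite vector with `a` on the first factor. -/
noncomputable def partialInner {ι κ : Type*} [Fintype ι] (a : EuclideanSpace ℂ ι)
    (Ψ : EuclideanSpace ℂ (ι × κ)) : EuclideanSpace ℂ κ :=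
  WithLp.toLp 2 fun k => ∑ i, star (a i) * Ψ (i, k)

section PartialInner

variable {m n : ℕ} (a : EuclideanSpace ℂ (Fin m)) (Ψ : EuclideanSpace ℂ (Fin m × Fin n))

theorem inner_tp_eq_inner_partialInner (b : EuclideanSpace ℂ (Fin n)) :
    ⟪tp a b, Ψ⟫ = ⟪b, partialInner a Ψ⟫ := by
  simp only [PiLp.inner_apply, RCLike.inner_apply, tp, partialInner, Fintype.sum_prod_type,
    Finset.sum_mul, map_mul, RCLike.star_def]
  rw [Finset.sum_comm]
  exact Finset.sum_congr rfl fun _ _ => Finset.sum_congr rfl fun _ _ => by ring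

theorem sum_norm_inner_tp_single_sq :
    ∑ k : Fin n, ‖⟪tp a (EuclideanSpace.single k 1), Ψ⟫‖ ^ 2 = ‖partialInner a Ψ‖ ^ 2 := by
  simp [inner_tp_eq_inner_partialInner, EuclideanSpace.inner_single_left,
    EuclideanSpace.norm_sq_eq]

end PartialInner

theorem cascaded_structure_general {m n : ℕ} (hn : 1 ≤ n)
    (Ψ : EuclideanSpace ℂ (Fin m × Fin n)) :
    sSup {r : ℝ | ∃ (a : EuclideanSpace ℂ (Fin m)) (b : EuclideanSpace ℂ (Fin n)),
        ‖a‖ = 1 ∧ ‖b‖ = 1 ∧ r = ‖⟪tp a b, Ψ⟫‖ ^ 2}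
      = sSup {r : ℝ | ∃ a : EuclideanSpace ℂ (Fin m), ‖a‖ = 1 ∧
          r = ∑ k : Fin n, ‖⟪tp a (EuclideanSpace.single k 1), Ψ⟫‖ ^ 2} := by
  have : NeZero n := ⟨by omega⟩
  simp_rw [sum_norm_inner_tp_single_sq, inner_tp_eq_inner_partialInner]
  apply csSup_eq_csSup_of_forall_exists_le
  · rintro _ ⟨a, b, ha, hb, rfl⟩
    exact ⟨_, ⟨a, ha, rfl⟩, norm_inner_sq_le_of_norm_eq_one hb _⟩
  · rintro _ ⟨a, ha, rfl⟩
    obtain ⟨b, hb, hbc⟩ := exists_norm_eq_one_norm_inner_eq (𝕜 := ℂ) (partialInner a Ψ)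
    exact ⟨_, ⟨a, b, ha, hb, rfl⟩, by rw [hbc]⟩

/-- **Theorem of cascaded structures** (rank-one case): for a vector `Ψ` in the bipartite
space, the supremum over pairs of unit vectors `a, b` of `|⟨a⊗b, Ψ⟩|²` equals the supremum
over single unit vectors `a` of `Σ_k |⟨a⊗e_k, Ψ⟩|²`; i.e. the maximal separability
eigenvalue of `|Ψ⟩⟨Ψ|` equals that of its partial trace over the second subsystem. -/
theorem cascaded_structure {m n : ℕ} (hm : 1 ≤ m) (hn : 1 ≤ n)
    (Ψ : EuclideanSpace ℂ (Fin m × Fin n)) :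
    sSup {r : ℝ | ∃ (a : EuclideanSpace ℂ (Fin m)) (b : EuclideanSpace ℂ (Fin n)),
        ‖a‖ = 1 ∧ ‖b‖ = 1 ∧ r = ‖⟪tp a b, Ψ⟫‖ ^ 2}
      = sSup {r : ℝ | ∃ a : EuclideanSpace ℂ (Fin m), ‖a‖ = 1 ∧
          r = ∑ k : Fin n, ‖⟪tp a (EuclideanSpace.single k 1), Ψ⟫‖ ^ 2} :=
  cascaded_structure_general hn Ψ
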